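/- arXiv:1104.2985 — 3 statements merged into one kernel-verified Lean document; each statement's English description precedes it below -/
import Mathlib

section
/- Fix ε > 0 and η ∈ C_c^1(ℝ^N; ℝ). Define I(ρ)(x) = -ε (ρ*∇η)(x) / √(1 + ‖(ρ*∇η)(x)‖²). Then for all r₁, r₂ ∈ L¹(ℝ^N; ℝ), ‖I(r₁) - I(r₂)‖_{L^∞} ≤ ε (1 + R² ‖∇η‖_{L¹}²) ‖∇η‖_{L^∞} ‖r₁ - r₂‖_{L¹}, provided r₁, r₂ take values in [0, R]. -/
/-!
After convolution with `∇η`, densities with values in `[0, R]` give vectors of norm at most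
`R ‖∇η‖_{L¹}`, and the difference of two convolutions has norm at most
`‖∇η‖_{L^∞} ‖r₁ - r₂‖_{L¹}`. It remains to see that `v ↦ v / √(1 + ‖v‖²)` is
`(1 + K²)`-Lipschitz on the ball of radius `K`: split the difference into a change of the vector
and a change of the scalar factor, and note that `s ↦ (1 + s)^{-1/2}` is `1/2`-Lipschitz on `[0, ∞)`.
-/

open MeasureTheory

lemma abs_inv_sqrt_one_add_sub_inv_sqrt_one_add_le {s t : ℝ} (hs : 0 ≤ s) (ht : 0 ≤ t) :
    |(√(1 + s))⁻¹ - (√(1 + t))⁻¹| ≤ |s - t| / 2 := by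
  set u := √(1 + s)
  set v := √(1 + t)
  have hu1 : 1 ≤ u := Real.one_le_sqrt.2 (by linarith)
  have hv1 : 1 ≤ v := Real.one_le_sqrt.2 (by linarith)
  have hu2 : u ^ 2 = 1 + s := Real.sq_sqrt (by linarith)
  have hv2 : v ^ 2 = 1 + t := Real.sq_sqrt (by linarith)
  have hdiff : u⁻¹ - v⁻¹ = (t - s) / (u * v * (u + v)) := by
    field_simp
    linear_combination hv2 - hu2
  calc |u⁻¹ - v⁻¹| = |t - s| / (u * v * (u + v)) := by
        rw [hdiff, abs_div, abs_of_pos (by positivity : 0 < u * v * (u + v))]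
    _ ≤ |t - s| / 2 := div_le_div_of_nonneg_left (abs_nonneg _) two_pos (by nlinarith)
    _ = |s - t| / 2 := by rw [abs_sub_comm]

lemma norm_inv_sqrt_one_add_sq_smul_sub_le {E : Type*} [NormedAddCommGroup E] [NormedSpace ℝ E]
    {a b : E} {K : ℝ} (ha : ‖a‖ ≤ K) (hb : ‖b‖ ≤ K) :
    ‖(√(1 + ‖a‖ ^ 2))⁻¹ • a - (√(1 + ‖b‖ ^ 2))⁻¹ • b‖ ≤ (1 + K ^ 2) * ‖a - b‖ := by
  have hK : 0 ≤ K := (norm_nonneg a).trans ha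
  set c := (√(1 + ‖a‖ ^ 2))⁻¹
  set d := (√(1 + ‖b‖ ^ 2))⁻¹
  have hc : |c| ≤ 1 := by
    rw [abs_of_nonneg (inv_nonneg.2 (Real.sqrt_nonneg _))]
    exact inv_le_one_of_one_le₀ (Real.one_le_sqrt.2 (le_add_of_nonneg_right (sq_nonneg _)))
  have hcd : |c - d| ≤ ‖a - b‖ * K :=
    calc |c - d| ≤ |‖a‖ ^ 2 - ‖b‖ ^ 2| / 2 :=
          abs_inv_sqrt_one_add_sub_inv_sqrt_one_add_le (sq_nonneg _) (sq_nonneg _)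
      _ = |‖a‖ - ‖b‖| * ((‖a‖ + ‖b‖) / 2) := by
          rw [sq_sub_sq, abs_mul, abs_of_nonneg (by positivity : 0 ≤ ‖a‖ + ‖b‖)]
          ring
      _ ≤ ‖a - b‖ * K := by
          gcongr
          · exact abs_norm_sub_norm_le a b
          · linarith
  calc ‖c • a - d • b‖ = ‖c • (a - b) + (c - d) • b‖ := by
        rw [smul_sub, sub_smul, sub_add_sub_cancel]
    _ ≤ |c| * ‖a - b‖ + |c - d| * ‖b‖ := by
        simpa only [norm_smul, Real.norm_eq_abs] using norm_add_le (c • (a - b)) ((c - d) • b)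
    _ ≤ 1 * ‖a - b‖ + ‖a - b‖ * K * K := by gcongr
    _ = (1 + K ^ 2) * ‖a - b‖ := by ring

section IntegralSmul

variable {α E : Type*} [MeasurableSpace α] {μ : Measure α}
  [NormedAddCommGroup E] [NormedSpace ℝ E] {ρ : α → ℝ} {h : α → E}

lemma norm_integral_smul_le_mul_integral_abs {M : ℝ} (hρ : Integrable ρ μ)
    (hM : ∀ᵐ y ∂μ, ‖h y‖ ≤ M) :
    ‖∫ y, ρ y • h y ∂μ‖ ≤ M * ∫ y, |ρ y| ∂μ := by
  rw [← integral_const_mul]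
  refine norm_integral_le_of_norm_le (hρ.abs.const_mul M) ?_
  filter_upwards [hM] with y hy
  rw [norm_smul, Real.norm_eq_abs, mul_comm M]
  exact mul_le_mul_of_nonneg_left hy (abs_nonneg _)

lemma norm_integral_smul_le_mul_integral_norm {R : ℝ} (hh : Integrable h μ)
    (hR : ∀ᵐ y ∂μ, |ρ y| ≤ R) :
    ‖∫ y, ρ y • h y ∂μ‖ ≤ R * ∫ y, ‖h y‖ ∂μ := by
  rw [← integral_const_mul]
  refine norm_integral_le_of_norm_le (hh.norm.const_mul R) ?_
  filter_upwards [hR] with y hy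
  rw [norm_smul, Real.norm_eq_abs]
  exact mul_le_mul_of_nonneg_right hy (norm_nonneg _)

lemma norm_integral_smul_sub_integral_smul_le {ρ₁ ρ₂ : α → ℝ} {M : ℝ} (hρ₁ : Integrable ρ₁ μ)
    (hρ₂ : Integrable ρ₂ μ) (hh : AEStronglyMeasurable h μ) (hM : ∀ᵐ y ∂μ, ‖h y‖ ≤ M) :
    ‖∫ y, ρ₁ y • h y ∂μ - ∫ y, ρ₂ y • h y ∂μ‖ ≤ M * ∫ y, |ρ₁ y - ρ₂ y| ∂μ := by
  have hint {ρ : α → ℝ} (hρ : Integrable ρ μ) : Integrable (fun y => ρ y • h y) μ :=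
    hρ.smul_bdd M hh hM
  rw [← integral_sub (hint hρ₁) (hint hρ₂)]
  simp_rw [← sub_smul]
  exact norm_integral_smul_le_mul_integral_abs (hρ₁.sub hρ₂) hM

end IntegralSmul

section Convolution

variable {G E : Type*} [MeasurableSpace G] [AddGroup G] [MeasurableAdd G] [MeasurableNeg G]
  {μ : Measure G} [μ.IsNegInvariant] [μ.IsAddLeftInvariant]
  [NormedAddCommGroup E] [NormedSpace ℝ E] {g : G → E}

lemma norm_integral_smul_comp_sub_le_of_abs_le {ρ : G → ℝ} {R : ℝ} (hg : Integrable g μ)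
    (hR : ∀ y, |ρ y| ≤ R) (x : G) :
    ‖∫ y, ρ y • g (x - y) ∂μ‖ ≤ R * ∫ z, ‖g z‖ ∂μ := by
  rw [← integral_sub_left_eq_self (fun z => ‖g z‖) μ x]
  exact norm_integral_smul_le_mul_integral_norm (hg.comp_sub_left x) (.of_forall hR)

end Convolution

section Gradient

variable {F : Type*} [NormedAddCommGroup F] [InnerProductSpace ℝ F] [CompleteSpace F] {η : F → ℝ}

lemma ContDiff.continuous_gradient (hη : ContDiff ℝ 1 η) : Continuous (gradient η) :=
  (InnerProductSpace.toDual ℝ F).symm.continuous.comp (hη.continuous_fderiv one_ne_zero)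

lemma HasCompactSupport.gradient (hη : HasCompactSupport η) : HasCompactSupport (gradient η) :=
  (hη.fderiv ℝ).comp_left (map_zero _)

end Gradient

theorem stmt3_general (N : ℕ) (ε R : ℝ) (hε : 0 < ε)
    (η : EuclideanSpace ℝ (Fin N) → ℝ) (hη : ContDiff ℝ 1 η)
    (hηc : HasCompactSupport η)
    (I : (EuclideanSpace ℝ (Fin N) → ℝ) → EuclideanSpace ℝ (Fin N) → EuclideanSpace ℝ (Fin N))
    (hI : ∀ ρ x, I ρ x =
      -((ε * (Real.sqrt (1 + ‖∫ y, ρ y • gradient η (x - y)‖ ^ 2))⁻¹) •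
        ∫ y, ρ y • gradient η (x - y)))
    (r₁ r₂ : EuclideanSpace ℝ (Fin N) → ℝ)
    (h1 : Integrable r₁) (h2 : Integrable r₂)
    (hb1 : ∀ x, r₁ x ∈ Set.Icc 0 R) (hb2 : ∀ x, r₂ x ∈ Set.Icc 0 R) :
    ∀ x, ‖I r₁ x - I r₂ x‖ ≤
      ε * (1 + R ^ 2 * (∫ z, ‖gradient η z‖) ^ 2) * (⨆ z, ‖gradient η z‖) *
        ∫ y, |r₁ y - r₂ y| := by
  intro x
  have hcont := hη.continuous_gradient
  have hsupp := hηc.gradient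
  have hbound : ∀ z, ‖gradient η z‖ ≤ ⨆ z, ‖gradient η z‖ :=
    le_ciSup (hcont.norm.bddAbove_range_of_hasCompactSupport hsupp.norm)
  have habs (r : EuclideanSpace ℝ (Fin N) → ℝ) (hr : ∀ y, r y ∈ Set.Icc 0 R) (y) : |r y| ≤ R :=
    (abs_of_nonneg (hr y).1).trans_le (hr y).2
  have hint := hcont.integrable_of_hasCompactSupport hsupp (μ := volume)
  have hdiff := norm_integral_smul_sub_integral_smul_le h1 h2
    (hcont.comp (continuous_sub_left x)).aestronglyMeasurable (.of_forall fun y => hbound (x - y))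
  have hlip := norm_inv_sqrt_one_add_sq_smul_sub_le
    (norm_integral_smul_comp_sub_le_of_abs_le hint (habs r₁ hb1) x)
    (norm_integral_smul_comp_sub_le_of_abs_le hint (habs r₂ hb2) x)
  set L := ∫ z, ‖gradient η z‖
  set M := ⨆ z, ‖gradient η z‖
  set D := ∫ y, |r₁ y - r₂ y|
  rw [hI, hI, mul_smul, mul_smul, neg_sub_neg, norm_sub_rev, ← smul_sub, norm_smul,
    Real.norm_eq_abs, abs_of_pos hε]
  calc _ ≤ ε * ((1 + (R * L) ^ 2) * (M * D)) :=
        mul_le_mul_of_nonneg_left (hlip.trans (mul_le_mul_of_nonneg_left hdiff (by positivity)))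
          hε.le
    _ = ε * (1 + R ^ 2 * L ^ 2) * M * D := by ring

/-- Lipschitz estimate in `L^∞` for the nonlocal deviation operator
`I(ρ) = -ε (ρ*∇η)/√(1+‖ρ*∇η‖²)`:
`‖I(r₁) - I(r₂)‖_{L^∞} ≤ ε (1 + R²‖∇η‖_{L¹}²) ‖∇η‖_{L^∞} ‖r₁ - r₂‖_{L¹}`. -/
theorem stmt3 (N : ℕ) (hN : 0 < N) (ε R : ℝ) (hε : 0 < ε) (hR : 0 < R)
    (η : EuclideanSpace ℝ (Fin N) → ℝ) (hη : ContDiff ℝ 1 η)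
    (hηc : HasCompactSupport η)
    (I : (EuclideanSpace ℝ (Fin N) → ℝ) → EuclideanSpace ℝ (Fin N) → EuclideanSpace ℝ (Fin N))
    (hI : ∀ ρ x, I ρ x =
      -((ε * (Real.sqrt (1 + ‖∫ y, ρ y • gradient η (x - y)‖ ^ 2))⁻¹) •
        ∫ y, ρ y • gradient η (x - y)))
    (r₁ r₂ : EuclideanSpace ℝ (Fin N) → ℝ)
    (h1 : Integrable r₁) (h2 : Integrable r₂)
    (hb1 : ∀ x, r₁ x ∈ Set.Icc 0 R) (hb2 : ∀ x, r₂ x ∈ Set.Icc 0 R) :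
    ∀ x, ‖I r₁ x - I r₂ x‖ ≤
      ε * (1 + R ^ 2 * (∫ z, ‖gradient η z‖) ^ 2) * (⨆ z, ‖gradient η z‖) *
        ∫ y, |r₁ y - r₂ y| :=
  stmt3_general N ε R hε η hη hηc I hI r₁ r₂ h1 h2 hb1 hb2
end

section
/- Let k ≥ 0, a ≥ 0, C ≥ 0 and suppose a nonnegative function u : [0,∞) → ℝ satisfies u(t) ≤ (a + 2Ct) e^{kt} for all t (the BV bound along iterations). Let (T_n) be defined by T_0 = 0 and T_{n+1} the unique solution of C₁(T_{n+1}−T_n)(1 + e^{kT_{n+1}} a + C₂ e^{k(T_{n+1}−T_n)}(2T_n e^{kT_n} + T_{n+1} − T_n)) = 1/2 with C₁, C₂ > 0. Then (T_n) is strictly increasing and T_n → ∞ as n → ∞. -/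
/-- The iteration times `T_n` of the fixed-point scheme (with `T_{n+1}` the
solution greater than `T_n` of the contraction relation) form a strictly
increasing sequence tending to `∞`. -/
theorem stmt11 (k a C C₁ C₂ : ℝ) (hk : 0 ≤ k) (ha : 0 ≤ a) (hC : 0 ≤ C)
    (h1 : 0 < C₁) (h2 : 0 < C₂)
    (u : ℝ → ℝ)
    (hu : ∀ t, 0 ≤ t → 0 ≤ u t ∧ u t ≤ (a + 2 * C * t) * Real.exp (k * t))
    (T : ℕ → ℝ) (hT0 : T 0 = 0)
    (hrec : ∀ n, T n < T (n + 1) ∧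
      C₁ * (T (n + 1) - T n) *
        (1 + Real.exp (k * T (n + 1)) * a +
          C₂ * Real.exp (k * (T (n + 1) - T n)) *
            (2 * T n * Real.exp (k * T n) + T (n + 1) - T n)) = 1 / 2) :
    StrictMono T ∧ Filter.Tendsto T Filter.atTop Filter.atTop := by
  have hmono : StrictMono T := strictMono_nat_of_lt_succ fun n => (hrec n).1
  refine ⟨hmono, ?_⟩
  rw [Filter.tendsto_atTop_atTop_iff_of_monotone hmono.monotone]
  intro b
  by_contra hcon
  push_neg at hcon
  obtain ⟨M, hM⟩ : ∃ M, M = max b 0 := ⟨_, rfl⟩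
  have hM0 : 0 ≤ M := hM ▸ le_max_right _ _
  have hTnonneg : ∀ n, 0 ≤ T n := fun n => hT0 ▸ hmono.monotone (Nat.zero_le n)
  have hTle : ∀ n, T n ≤ M := fun n => hM ▸ (hcon n).le.trans (le_max_left _ _)
  obtain ⟨B, hB⟩ : ∃ B, B = 1 + Real.exp (k * M) * a +
      C₂ * Real.exp (k * M) * (2 * M * Real.exp (k * M) + M) := ⟨_, rfl⟩
  have hBpos : 0 < B := by rw [hB]; positivity
  obtain ⟨δ, hδ⟩ : ∃ δ, δ = 1 / (2 * C₁ * B) := ⟨_, rfl⟩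
  have hδpos : 0 < δ := by rw [hδ]; positivity
  have hstep : ∀ n, δ ≤ T (n + 1) - T n := by
    intro n
    obtain ⟨hlt, heq⟩ := hrec n
    obtain ⟨d, hd⟩ : ∃ d, d = T (n + 1) - T n := ⟨_, rfl⟩
    rw [← hd] at heq ⊢
    have hdpos : 0 < d := by rw [hd]; linarith
    have hdM : d ≤ M := by
      have := hTnonneg n; have := hTle (n + 1); rw [hd]; linarith
    have hexp1 : Real.exp (k * T (n + 1)) ≤ Real.exp (k * M) :=
      Real.exp_le_exp.2 (mul_le_mul_of_nonneg_left (hTle (n + 1)) hk)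
    have hexp2 : Real.exp (k * d) ≤ Real.exp (k * M) :=
      Real.exp_le_exp.2 (mul_le_mul_of_nonneg_left hdM hk)
    have hexp3 : Real.exp (k * T n) ≤ Real.exp (k * M) :=
      Real.exp_le_exp.2 (mul_le_mul_of_nonneg_left (hTle n) hk)
    have hTn := hTnonneg n
    have hTnM := hTle n
    have e1 := (Real.exp_pos (k * T n)).le
    have e2 := (Real.exp_pos (k * d)).le
    have e3 := (Real.exp_pos (k * M)).le
    have key : 2 * T n * Real.exp (k * T n) + d ≤ 2 * M * Real.exp (k * M) + M := by
      nlinarith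
    have inner_nonneg : 0 ≤ 2 * T n * Real.exp (k * T n) + d := by positivity
    have hprod : C₂ * Real.exp (k * d) * (2 * T n * Real.exp (k * T n) + d) ≤
        C₂ * Real.exp (k * M) * (2 * M * Real.exp (k * M) + M) :=
      mul_le_mul (mul_le_mul_of_nonneg_left hexp2 h2.le) key inner_nonneg (by positivity)
    have hXB : 1 + Real.exp (k * T (n + 1)) * a +
        C₂ * Real.exp (k * d) * (2 * T n * Real.exp (k * T n) + d) ≤ B := by
      rw [hB]
      have := mul_le_mul_of_nonneg_right hexp1 ha
      linarith
    have hXpos : 0 < 1 + Real.exp (k * T (n + 1)) * a +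
        C₂ * Real.exp (k * d) * (2 * T n * Real.exp (k * T n) + d) := by
      have h4 : 0 ≤ Real.exp (k * T (n + 1)) * a := by positivity
      have h5 : 0 ≤ C₂ * Real.exp (k * d) * (2 * T n * Real.exp (k * T n) + d) := by
        positivity
      linarith
    have heq' : C₁ * d * (1 + Real.exp (k * T (n + 1)) * a +
        C₂ * Real.exp (k * d) * (2 * T n * Real.exp (k * T n) + d)) = 1 / 2 := by
      rw [← heq, hd]; ring
    have hhalf : 1 / 2 ≤ C₁ * d * B := by
      rw [← heq']
      have h' : 0 ≤ C₁ * d := by positivity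
      nlinarith
    rw [hδ, div_le_iff₀ (by positivity)]
    nlinarith
  have hlow : ∀ n : ℕ, (n : ℝ) * δ ≤ T n := by
    intro n
    induction n with
    | zero => simp [hT0]
    | succ m ih =>
      have := hstep m
      push_cast
      linarith
  obtain ⟨n, hn⟩ := exists_nat_gt (b / δ)
  have hbn : b < T n := by
    have : b < n * δ := by rw [div_lt_iff₀ hδpos] at hn; linarith
    linarith [hlow n]
  exact absurd hbn (not_lt.2 (hcon n).le)
end

section
/- Let b : [0,∞) → (0,∞) be continuous and nondecreasing. Then for every t ≥ 0, e^{−∫₀ᵗ b(u) du} + b(t) ∫₀ᵗ e^{−∫₀^τ b(u) du} dτ ≤ b(t)/b(0). -/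
/-!
With `B t = ∫₀ᵗ b`, the function `-e^{-B}` is a primitive of `b e^{-B}`, so
`∫₀ᵗ b e^{-B} = 1 - e^{-B(t)}`. Since `b ≥ b(0)` on `[0, t]`, this gives
`b(0) ∫₀ᵗ e^{-B} ≤ 1 - e^{-B(t)}`, and then, with `r = b(t)/b(0) ≥ 1`,
`e^{-B(t)} + b(t) ∫₀ᵗ e^{-B} ≤ e^{-B(t)} + r (1 - e^{-B(t)}) ≤ r`.
-/

open intervalIntegral Real

theorem hasDerivAt_neg_exp_neg_integral {b : ℝ → ℝ} (hb : Continuous b) (a s : ℝ) :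
    HasDerivAt (fun x => -exp (-∫ u in a..x, b u)) (b s * exp (-∫ u in a..s, b u)) s := by
  have hB : HasDerivAt (fun x => ∫ u in a..x, b u) (b s) s :=
    integral_hasDerivAt_right (hb.intervalIntegrable a s) (hb.stronglyMeasurableAtFilter _ _)
      hb.continuousAt
  have h : HasDerivAt (fun x => -exp (-∫ u in a..x, b u))
      (-(exp (-∫ u in a..s, b u) * -b s)) s := hB.neg.exp.neg
  convert h using 1
  ring

theorem continuous_exp_neg_integral {b : ℝ → ℝ} (hb : Continuous b) (a : ℝ) :
    Continuous fun τ => exp (-∫ u in a..τ, b u) :=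
  (continuous_primitive hb.intervalIntegrable a).neg.rexp

theorem integral_mul_exp_neg_integral {b : ℝ → ℝ} (hb : Continuous b) (a t : ℝ) :
    ∫ τ in a..t, b τ * exp (-∫ u in a..τ, b u) = 1 - exp (-∫ u in a..t, b u) := by
  rw [integral_eq_sub_of_hasDerivAt (fun s _ => hasDerivAt_neg_exp_neg_integral hb a s)
    ((hb.mul (continuous_exp_neg_integral hb a)).intervalIntegrable a t)]
  simp only [integral_same, neg_zero, exp_zero]
  ring

theorem mul_integral_exp_neg_integral_le {b : ℝ → ℝ} (hb : Continuous b) {a t : ℝ} (hat : a ≤ t)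
    (hmono : MonotoneOn b (Set.Icc a t)) :
    b a * ∫ τ in a..t, exp (-∫ u in a..τ, b u) ≤ 1 - exp (-∫ u in a..t, b u) := by
  have hE := continuous_exp_neg_integral hb a
  rw [← integral_mul_exp_neg_integral hb, ← integral_const_mul]
  refine integral_mono_on hat ((continuous_const.mul hE).intervalIntegrable _ _)
    ((hb.mul hE).intervalIntegrable _ _) fun x hx => ?_
  exact mul_le_mul_of_nonneg_right (hmono (Set.left_mem_Icc.2 hat) hx hx.1) (exp_nonneg _)

/-- For `b` continuous, positive and nondecreasing on `[0,∞)`: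
`e^{−∫₀ᵗ b} + b(t) ∫₀ᵗ e^{−∫₀^τ b} dτ ≤ b(t)/b(0)`. -/
theorem stmt12 (b : ℝ → ℝ) (hb : Continuous b) (hpos : ∀ t, 0 ≤ t → 0 < b t)
    (hmono : MonotoneOn b (Set.Ici 0)) :
    ∀ t, 0 ≤ t →
      Real.exp (-∫ u in (0:ℝ)..t, b u) +
        b t * ∫ τ in (0:ℝ)..t, Real.exp (-∫ u in (0:ℝ)..τ, b u) ≤
      b t / b 0 := by
  intro t ht
  set E := exp (-∫ u in (0:ℝ)..t, b u)
  set I := ∫ τ in (0:ℝ)..t, exp (-∫ u in (0:ℝ)..τ, b u)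
  have hb0 : 0 < b 0 := hpos 0 le_rfl
  have hbt : b 0 ≤ b t := hmono Set.self_mem_Ici ht ht
  have hI : b 0 * I ≤ 1 - E :=
    mul_integral_exp_neg_integral_le hb ht (hmono.mono Set.Icc_subset_Ici_self)
  have hr : 1 ≤ b t / b 0 := (one_le_div hb0).2 hbt
  have hE : 0 < E := exp_pos _
  calc E + b t * I = E + b t / b 0 * (b 0 * I) := by field_simp
    _ ≤ E + b t / b 0 * (1 - E) := by gcongr
    _ ≤ b t / b 0 := by nlinarith
end
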